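/- arXiv:1311.5481 — 3 statements merged into one kernel-verified Lean document; each statement's English description precedes it below -/
import Mathlib

section
/- For the Bounded Color Matching problem with edge profits p : E → ℚ≥0, every greedy solution G of the subset system 𝓛 = { M ⊆ E : M is a matching and |M ∩ E_j| ≤ w_j for every color j } satisfies 3 · p(G) ≥ p(M) for every matching M with |M ∩ E_j| ≤ w_j for all j; that is, the greedy algorithm is a 1/3-approximation for weighted Bounded Color Matching. -/
/-- A set of edges (as unordered pairs) is a matching if its edges are pairwise
vertex-disjoint. -/
def IsMatchingSet {V : Type*} (M : Finset (Sym2 V)) : Prop :=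
  ∀ e ∈ M, ∀ f ∈ M, e ≠ f → ∀ v : V, v ∈ e → v ∉ f

/-- `Gr` is a greedy solution for the system `𝓛` with weights `p`: it belongs to `𝓛`, is
maximal in `𝓛`, and admits an enumeration `g₁, …, g_t` such that each `gᵢ` has maximum
weight among all elements whose addition to `{g₁, …, g_{i-1}}` keeps the set in `𝓛`. -/
def IsGreedySolution {α : Type*} [DecidableEq α] (𝓛 : Finset α → Prop) (p : α → ℚ)
    (Gr : Finset α) : Prop :=
  𝓛 Gr ∧ (∀ Y, 𝓛 Y → Gr ⊆ Y → Y = Gr) ∧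
  ∃ l : List α, l.Nodup ∧ l.toFinset = Gr ∧
    ∀ i : Fin l.length, ∀ e : α, e ∉ (l.take i).toFinset →
      𝓛 (insert e (l.take i).toFinset) → p e ≤ p (l.get i)

/-!
The system is `3`-extendible in the sense of Mestre: if `C ⊆ D` are feasible and `C + x` is
feasible, then `x` can be added to `D` after deleting at most three elements of `D \ C`, namely
the at most two edges of the matching `D` that meet `x` and possibly one edge of the color of
`x`. Running through the greedy choices `g₁, …, g_t` and exchanging them one by one into a
competing feasible set `O`, each step deletes at most three elements, each of weight at most
`p gᵢ` because it could have been chosen instead of `gᵢ`, and adds `gᵢ`; so the weight drops by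
at most `2 p(Gr)` in total. The exchanges end at a feasible superset of the greedy solution,
which by maximality is the greedy solution itself: `p(O) - 2 p(Gr) ≤ p(Gr)`.
-/

open Finset

theorem List.toFinset_take_add_one {α : Type*} [DecidableEq α] {l : List α} {n : ℕ}
    (hn : n < l.length) : (l.take (n + 1)).toFinset = insert l[n] (l.take n).toFinset := by
  rw [← List.take_concat_get' l n hn, List.toFinset_append]
  ext
  simp [or_comm]

theorem List.Nodup.getElem_notMem_take {α : Type*} {l : List α} (hl : l.Nodup) {n : ℕ}
    (hn : n < l.length) : l[n] ∉ l.take n := by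
  have := (List.take_concat_get' l n hn).symm ▸ hl.sublist (List.take_sublist (n + 1) l)
  exact fun h => (List.nodup_append.1 this).2.2 _ h _ (List.mem_singleton_self _) rfl

section Extendible

variable {α : Type*} [DecidableEq α]

/-- Mestre's `k`-extendible subset systems. -/
def IsExtendible (𝓛 : Finset α → Prop) (k : ℕ) : Prop :=
  ∀ ⦃C D : Finset α⦄ ⦃x : α⦄, C ⊆ D → 𝓛 D → x ∉ D → 𝓛 (insert x C) →
    ∃ Y ⊆ D \ C, #Y ≤ k ∧ 𝓛 (insert x (D \ Y))

theorem isExtendible_subset (E : Finset α) : IsExtendible (· ⊆ E) 0 :=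
  fun _ _ _ _ hD _ hx =>
    ⟨∅, empty_subset _, le_rfl, by rw [sdiff_empty]; exact insert_subset (hx (mem_insert_self _ _)) hD⟩

theorem IsExtendible.inf {𝓛₁ 𝓛₂ : Finset α → Prop} {k₁ k₂ : ℕ}
    (h₁ : IsExtendible 𝓛₁ k₁) (h₂ : IsExtendible 𝓛₂ k₂)
    (hL₁ : IsLowerSet {s | 𝓛₁ s}) (hL₂ : IsLowerSet {s | 𝓛₂ s}) :
    IsExtendible (𝓛₁ ⊓ 𝓛₂) (k₁ + k₂) := by
  intro C D x hCD hD hxD hx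
  obtain ⟨Y₁, hY₁, hY₁k, hY₁L⟩ := h₁ hCD hD.1 hxD hx.1
  have hCD₁ : C ⊆ D \ Y₁ := fun c hc =>
    mem_sdiff.2 ⟨hCD hc, fun hcY => (mem_sdiff.1 (hY₁ hcY)).2 hc⟩
  obtain ⟨Y₂, hY₂, hY₂k, hY₂L⟩ :=
    h₂ hCD₁ (hL₂ sdiff_subset hD.2) (fun h => hxD (mem_sdiff.1 h).1) hx.2
  refine ⟨Y₁ ∪ Y₂, union_subset hY₁ (hY₂.trans (sdiff_subset_sdiff sdiff_subset le_rfl)),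
    (card_union_le _ _).trans (add_le_add hY₁k hY₂k), ?_, ?_⟩
  · exact hL₁ (insert_subset_insert _ (sdiff_subset_sdiff le_rfl subset_union_left)) hY₁L
  · rwa [sdiff_sdiff_left] at hY₂L

variable {𝓛 : Finset α → Prop} {k : ℕ} {p : α → ℚ}

theorem IsExtendible.exists_exchange (hk : 1 ≤ k) (hL : IsLowerSet {s | 𝓛 s})
    (hext : IsExtendible 𝓛 k) {C D : Finset α} {x : α} (hCD : C ⊆ D) (hD : 𝓛 D)
    (hx : 𝓛 (insert x C)) (hpx : 0 ≤ p x) (hmax : ∀ y ∉ C, 𝓛 (insert y C) → p y ≤ p x) :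
    ∃ D', 𝓛 D' ∧ insert x C ⊆ D' ∧ ∑ e ∈ D, p e + p x ≤ ∑ e ∈ D', p e + k * p x := by
  by_cases hxD : x ∈ D
  · refine ⟨D, hD, insert_subset hxD hCD, ?_⟩
    have : p x ≤ k * p x := le_mul_of_one_le_left hpx (by exact_mod_cast hk)
    linarith
  obtain ⟨Y, hYD, hYk, hY⟩ := hext hCD hD hxD hx
  have hpY : ∑ y ∈ Y, p y ≤ k * p x := by
    calc ∑ y ∈ Y, p y ≤ #Y • p x := sum_le_card_nsmul _ _ _ fun y hy => ?_
      _ ≤ k * p x := by rw [nsmul_eq_mul]; gcongr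
    obtain ⟨hyD, hyC⟩ := mem_sdiff.1 (hYD hy)
    exact hmax y hyC (hL (insert_subset hyD hCD) hD)
  refine ⟨insert x (D \ Y), hY, insert_subset_insert _ fun c hc => ?_, ?_⟩
  · exact mem_sdiff.2 ⟨hCD hc, fun hcY => (mem_sdiff.1 (hYD hcY)).2 hc⟩
  · rw [sum_insert fun h => hxD (mem_sdiff.1 h).1]
    have := sum_sdiff (f := p) (hYD.trans sdiff_subset)
    linarith

theorem exists_superset_take_of_greedy (hk : 1 ≤ k) (hL : IsLowerSet {s | 𝓛 s})
    (hext : IsExtendible 𝓛 k) (hp : ∀ e, 0 ≤ p e) {l : List α} (hnd : l.Nodup)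
    (hl : 𝓛 l.toFinset)
    (hgreedy : ∀ i : Fin l.length, ∀ e, e ∉ (l.take i).toFinset →
      𝓛 (insert e (l.take i).toFinset) → p e ≤ p (l.get i))
    {O : Finset α} (hO : 𝓛 O) {n : ℕ} (hn : n ≤ l.length) :
    ∃ O', 𝓛 O' ∧ (l.take n).toFinset ⊆ O' ∧
      ∑ e ∈ O, p e + ∑ e ∈ (l.take n).toFinset, p e ≤
        ∑ e ∈ O', p e + k * ∑ e ∈ (l.take n).toFinset, p e := by
  induction n with
  | zero => exact ⟨O, hO, by simp, by simp⟩
  | succ n ih =>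
    obtain ⟨O', hO', hsub, hsum⟩ := ih (by omega)
    have hn' : n < l.length := by omega
    have hnotin : l[n] ∉ (l.take n).toFinset := by
      simpa using hnd.getElem_notMem_take hn'
    have hins : 𝓛 (insert l[n] (l.take n).toFinset) := by
      rw [← List.toFinset_take_add_one hn']
      exact hL (fun e he => List.mem_toFinset.2 (List.mem_of_mem_take (List.mem_toFinset.1 he))) hl
    obtain ⟨O'', hO'', hsub', hsum'⟩ :=
      hext.exists_exchange hk hL hsub hO' hins (hp _) (hgreedy ⟨n, hn'⟩)
    refine ⟨O'', hO'', (List.toFinset_take_add_one hn').symm ▸ hsub', ?_⟩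
    rw [List.toFinset_take_add_one hn', sum_insert hnotin]
    linarith

theorem IsGreedySolution.sum_le_mul_sum_of_isExtendible {Gr O : Finset α} (hk : 1 ≤ k)
    (hL : IsLowerSet {s | 𝓛 s}) (hext : IsExtendible 𝓛 k) (hp : ∀ e, 0 ≤ p e)
    (hG : IsGreedySolution 𝓛 p Gr) (hO : 𝓛 O) :
    ∑ e ∈ O, p e ≤ k * ∑ e ∈ Gr, p e := by
  obtain ⟨hGr, hmax, l, hnd, rfl, hgreedy⟩ := hG
  obtain ⟨O', hO', hsub, hsum⟩ :=
    exists_superset_take_of_greedy hk hL hext hp hnd hGr hgreedy hO le_rfl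
  rw [List.take_length] at hsub hsum
  rw [hmax O' hO' hsub] at hsum
  linarith

end Extendible

section Matching

variable {V : Type*}

theorem isLowerSet_isMatchingSet : IsLowerSet {M : Finset (Sym2 V) | IsMatchingSet M} :=
  fun _ _ hNM hM e he f hf => hM e (hNM he) f (hNM hf)

theorem IsMatchingSet.card_filter_mem_le_one [DecidableEq V] {M : Finset (Sym2 V)}
    (hM : IsMatchingSet M) (v : V) : #(M.filter (v ∈ ·)) ≤ 1 :=
  card_le_one.2 fun e he f hf => by
    by_contra hef
    exact hM e (mem_filter.1 he).1 f (mem_filter.1 hf).1 hef v (mem_filter.1 he).2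
      (mem_filter.1 hf).2

theorem isExtendible_isMatchingSet [DecidableEq V] :
    IsExtendible (IsMatchingSet (V := V)) 2 := by
  intro C D x hCD hD hxD hx
  induction x using Sym2.ind with | _ a b => ?_
  refine ⟨D.filter (a ∈ ·) ∪ D.filter (b ∈ ·), fun e he => ?_,
    (card_union_le _ _).trans
      (add_le_add (hD.card_filter_mem_le_one a) (hD.card_filter_mem_le_one b)), ?_⟩
  · obtain ⟨v, hvx, heD, hve⟩ : ∃ v ∈ s(a, b), e ∈ D ∧ v ∈ e := by
      rcases mem_union.1 he with h | h
      · exact ⟨a, Sym2.mem_mk_left a b, mem_filter.1 h⟩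
      · exact ⟨b, Sym2.mem_mk_right a b, mem_filter.1 h⟩
    exact mem_sdiff.2 ⟨heD, fun heC => hx _ (mem_insert_self _ _) e (mem_insert_of_mem heC)
      (fun h => hxD (h ▸ heD)) v hvx hve⟩
  · have hfar : ∀ f ∈ D \ (D.filter (a ∈ ·) ∪ D.filter (b ∈ ·)), ∀ v ∈ s(a, b), v ∉ f := by
      intro f hf v hv hvf
      obtain ⟨hfD, hfY⟩ := mem_sdiff.1 hf
      rcases Sym2.mem_iff.1 hv with rfl | rfl
      · exact hfY (mem_union_left _ (mem_filter.2 ⟨hfD, hvf⟩))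
      · exact hfY (mem_union_right _ (mem_filter.2 ⟨hfD, hvf⟩))
    intro e he f hf hef v hve hvf
    rcases mem_insert.1 he with rfl | he <;> rcases mem_insert.1 hf with rfl | hf
    · exact hef rfl
    · exact hfar f hf v hve hvf
    · exact hfar e he v hvf hve
    · exact hD e (mem_sdiff.1 he).1 f (mem_sdiff.1 hf).1 hef v hve hvf

end Matching

section ColorBounded

variable {α ι : Type*} [DecidableEq ι]

def IsColorBounded (c : α → ι) (w : ι → ℕ) (M : Finset α) : Prop :=
  ∀ j, #(M.filter (fun e => c e = j)) ≤ w j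

variable {c : α → ι} {w : ι → ℕ}

theorem isLowerSet_isColorBounded : IsLowerSet {M | IsColorBounded c w M} :=
  fun _ _ hNM hM j => (card_le_card (filter_subset_filter _ hNM)).trans (hM j)

theorem card_filter_insert_le [DecidableEq α] (c : α → ι) (x : α) (s : Finset α) (j : ι) :
    #((insert x s).filter (fun e => c e = j)) ≤ #(s.filter (fun e => c e = j)) + 1 := by
  rw [filter_insert]
  split_ifs
  · exact card_insert_le _ _
  · exact Nat.le_succ _

/-- If the color class of `x` is full in `D`, it is not full in `C`, so it has an element in
`D \ C` to give up for `x`. -/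
theorem isExtendible_isColorBounded [DecidableEq α] : IsExtendible (IsColorBounded c w) 1 := by
  intro C D x hCD hD hxD hx
  by_cases hfull : #(D.filter (fun e => c e = c x)) < w (c x)
  · refine ⟨∅, empty_subset _, by simp, fun j => ?_⟩
    rw [sdiff_empty]
    by_cases hj : c x = j
    · subst hj
      exact (card_filter_insert_le c x D _).trans hfull
    · rw [filter_insert, if_neg hj]
      exact hD j
  have hlt : #(C.filter (fun e => c e = c x)) < #(D.filter (fun e => c e = c x)) := by
    have := hx (c x)
    rw [filter_insert, if_pos rfl,
      card_insert_of_notMem fun h => hxD (hCD (mem_filter.1 h).1)] at this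
    omega
  obtain ⟨y, hyD, hyC⟩ := exists_mem_notMem_of_card_lt_card hlt
  refine ⟨{y}, singleton_subset_iff.2 (mem_sdiff.2 ⟨(mem_filter.1 hyD).1, fun h =>
    hyC (mem_filter.2 ⟨h, (mem_filter.1 hyD).2⟩)⟩), (card_singleton y).le, fun j => ?_⟩
  rw [sdiff_singleton_eq_erase]
  by_cases hj : c x = j
  · subst hj
    calc _ ≤ #((D.erase y).filter (fun e => c e = c x)) + 1 := card_filter_insert_le c x _ _
      _ = #(D.filter (fun e => c e = c x)) := by rw [filter_erase, card_erase_add_one hyD]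
      _ ≤ w (c x) := hD _
  · rw [filter_insert, if_neg hj]
    exact (card_le_card (filter_subset_filter _ (erase_subset _ _))).trans (hD j)

end ColorBounded

section BoundedColorMatching

variable {V ι : Type*} [DecidableEq ι] (E : Finset (Sym2 V)) (c : Sym2 V → ι) (w : ι → ℕ)

theorem isLowerSet_boundedColorMatching :
    IsLowerSet {M | M ⊆ E ∧ IsMatchingSet M ∧ IsColorBounded c w M} :=
  (isLowerSet_Iic E).inter (isLowerSet_isMatchingSet.inter isLowerSet_isColorBounded)

theorem isExtendible_boundedColorMatching [DecidableEq V] :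
    IsExtendible (fun M => M ⊆ E ∧ IsMatchingSet M ∧ IsColorBounded c w M) 3 :=
  (isExtendible_subset E).inf
    (isExtendible_isMatchingSet.inf isExtendible_isColorBounded isLowerSet_isMatchingSet
      isLowerSet_isColorBounded)
    (isLowerSet_Iic E) (isLowerSet_isMatchingSet.inter isLowerSet_isColorBounded)

end BoundedColorMatching

theorem greedy_boundedColorMatching_third_approx_general
    {V : Type*} [Fintype V] [DecidableEq V]
    (G : SimpleGraph V) [DecidableRel G.Adj]
    (k : ℕ) (c : Sym2 V → Fin k) (w : Fin k → ℕ)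
    (p : Sym2 V → ℚ) (hp : ∀ e, 0 ≤ p e)
    (𝓛 : Finset (Sym2 V) → Prop)
    (h𝓛 : ∀ M, 𝓛 M ↔ (M ⊆ G.edgeFinset ∧ IsMatchingSet M ∧
      ∀ j, (M.filter (fun e => c e = j)).card ≤ w j))
    (Gr : Finset (Sym2 V)) (hgreedy : IsGreedySolution 𝓛 p Gr) :
    ∀ M : Finset (Sym2 V), M ⊆ G.edgeFinset → IsMatchingSet M →
      (∀ j, (M.filter (fun e => c e = j)).card ≤ w j) →
      ∑ e ∈ M, p e ≤ 3 * ∑ e ∈ Gr, p e := by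
  intro M hME hMm hMw
  obtain rfl : 𝓛 = fun M => M ⊆ G.edgeFinset ∧ IsMatchingSet M ∧ IsColorBounded c w M :=
    funext fun M => propext (h𝓛 M)
  exact_mod_cast hgreedy.sum_le_mul_sum_of_isExtendible (by norm_num)
    (isLowerSet_boundedColorMatching _ c w) (isExtendible_boundedColorMatching _ c w) hp
    ⟨hME, hMm, hMw⟩

/-- The greedy algorithm is a `1/3`-approximation for weighted Bounded Color Matching:
for any greedy solution `Gr` of the associated subset system and any matching `M`
respecting the color bounds, `3 · p(Gr) ≥ p(M)`. -/
theorem greedy_boundedColorMatching_third_approx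
    {V : Type*} [Fintype V] [DecidableEq V]
    (G : SimpleGraph V) [DecidableRel G.Adj]
    (k : ℕ) (c : Sym2 V → Fin k) (w : Fin k → ℕ) (hw : ∀ j, 1 ≤ w j)
    (p : Sym2 V → ℚ) (hp : ∀ e, 0 ≤ p e)
    (𝓛 : Finset (Sym2 V) → Prop)
    (h𝓛 : ∀ M, 𝓛 M ↔ (M ⊆ G.edgeFinset ∧ IsMatchingSet M ∧
      ∀ j, (M.filter (fun e => c e = j)).card ≤ w j))
    (Gr : Finset (Sym2 V)) (hgreedy : IsGreedySolution 𝓛 p Gr) :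
    ∀ M : Finset (Sym2 V), M ⊆ G.edgeFinset → IsMatchingSet M →
      (∀ j, (M.filter (fun e => c e = j)).card ≤ w j) →
      ∑ e ∈ M, p e ≤ 3 * ∑ e ∈ Gr, p e :=
  greedy_boundedColorMatching_third_approx_general G k c w p hp 𝓛 h𝓛 Gr hgreedy
end

section
/- Let G = (V, E) be a finite simple undirected graph, let x : E → ℝ≥0, and let 𝓛 be a laminar family of subsets of V such that every S ∈ 𝓛 has odd cardinality at least 3 and satisfies Σ_{e∈E(S)} x_e = (|S| − 1)/2. Then |𝓛| ≤ Σ_{e∈E} x_e. -/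
/-! Every member of `𝓛` lies in a maximal one, and the maximal members `M` are pairwise disjoint,
so their edge sets `E(M)` are disjoint and `|𝓛| = ∑_M |{T ∈ 𝓛 | T ⊆ M}|`. By tightness it then
suffices that at most `(|M| - 1) / 2` members lie inside `M`. For an arbitrary set `S` containing
a member, `2 |{T ∈ 𝓛 | T ⊆ S}| + 1 ≤ |S|` holds by strong induction on `S`: a maximal member `M`
strictly inside `S` splits the members strictly inside `S` into those inside `M` and those inside
`S \ M`, and when `S` is itself a member, oddness of `|S|` supplies the extra `1`. -/

def Laminar {α : Type*} (𝓛 : Finset (Finset α)) : Prop :=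
  ∀ S ∈ 𝓛, ∀ T ∈ 𝓛, S ⊆ T ∨ T ⊆ S ∨ Disjoint S T

open Finset

lemma Finset.disjoint_sym2 {α : Type*} {s t : Finset α} (h : Disjoint s t) :
    Disjoint s.sym2 t.sym2 :=
  disjoint_left.2 fun e hs ht =>
    disjoint_left.1 h (mem_sym2_iff.1 hs _ e.out_fst_mem) (mem_sym2_iff.1 ht _ e.out_fst_mem)

lemma Finset.sum_sum_inter_sym2_le {α β : Type*} [DecidableEq α] [AddCommMonoid β]
    [PartialOrder β] [IsOrderedAddMonoid β] {𝓜 : Finset (Finset α)}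
    (h𝓜 : (𝓜 : Set (Finset α)).PairwiseDisjoint id) (E : Finset (Sym2 α)) {x : Sym2 α → β}
    (hx : ∀ e ∈ E, 0 ≤ x e) :
    ∑ M ∈ 𝓜, ∑ e ∈ E ∩ M.sym2, x e ≤ ∑ e ∈ E, x e := by
  rw [← sum_biUnion (t := fun M => E ∩ M.sym2) fun M hM N hN hMN =>
    (disjoint_sym2 (h𝓜 hM hN hMN)).mono inter_subset_right inter_subset_right]
  exact sum_le_sum_of_subset_of_nonneg (biUnion_subset.2 fun _ _ => inter_subset_left)
    fun e he _ => hx e he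

namespace Laminar

variable {α : Type*} {𝓛 : Finset (Finset α)}

lemma exists_pairwiseDisjoint_cover (hlam : Laminar 𝓛) :
    ∃ 𝓜 ⊆ 𝓛, (𝓜 : Set (Finset α)).PairwiseDisjoint id ∧ ∀ T ∈ 𝓛, ∃ M ∈ 𝓜, T ⊆ M := by
  classical
  refine ⟨𝓛.filter (Maximal (· ∈ 𝓛)), filter_subset _ _, ?_, fun T hT => ?_⟩
  · intro M hM N hN hMN
    simp only [mem_coe, mem_filter] at hM hN
    rcases hlam M hM.1 N hN.1 with hMN' | hNM | hdisj
    · exact absurd (subset_antisymm hMN' (hM.2.2 hN.1 hMN')) hMN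
    · exact absurd (subset_antisymm (hN.2.2 hM.1 hNM) hNM) hMN
    · exact hdisj
  · obtain ⟨M, hTM, hM⟩ := 𝓛.exists_le_maximal hT
    exact ⟨M, mem_filter.2 ⟨hM.1, hM⟩, hTM⟩

variable [DecidableEq α]

lemma filter_ssubset_eq_erase (S : Finset α) :
    𝓛.filter (· ⊂ S) = (𝓛.filter (· ⊆ S)).erase S := by
  ext T
  simp only [mem_filter, mem_erase, ssubset_iff_subset_ne]
  tauto

lemma disjoint_filter_subset (hne : ∀ T ∈ 𝓛, T.Nonempty) {s t : Finset α}
    (hst : Disjoint s t) : Disjoint (𝓛.filter (· ⊆ s)) (𝓛.filter (· ⊆ t)) := by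
  refine disjoint_left.2 fun T hs ht => ?_
  obtain ⟨a, ha⟩ := hne T (mem_filter.1 hs).1
  exact disjoint_left.1 hst ((mem_filter.1 hs).2 ha) ((mem_filter.1 ht).2 ha)

lemma filter_ssubset_eq_union (hlam : Laminar 𝓛) {M S : Finset α} (hM : M ∈ 𝓛)
    (hMne : M.Nonempty) (hMS : M ⊂ S) (hmax : ∀ T ∈ 𝓛, T ⊂ S → M ⊆ T → T ⊆ M) :
    𝓛.filter (· ⊂ S) = 𝓛.filter (· ⊆ M) ∪ 𝓛.filter (· ⊆ S \ M) := by
  ext T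
  simp only [mem_union, mem_filter, subset_sdiff]
  constructor
  · rintro ⟨hT, hTS⟩
    rcases hlam T hT M hM with hTM | hMT | hdisj
    · exact .inl ⟨hT, hTM⟩
    · exact .inl ⟨hT, hmax T hT hTS hMT⟩
    · exact .inr ⟨hT, hTS.subset, hdisj⟩
  · rintro (⟨hT, hTM⟩ | ⟨hT, hTS, hdisj⟩)
    · exact ⟨hT, hTM.trans_ssubset hMS⟩
    · refine ⟨hT, hTS.ssubset_of_ne ?_⟩
      rintro rfl
      obtain ⟨a, ha⟩ := hMne
      exact disjoint_left.1 hdisj (hMS.subset ha) ha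

lemma two_mul_card_filter_ssubset_add_two_le (hlam : Laminar 𝓛) (hne : ∀ T ∈ 𝓛, T.Nonempty)
    {S : Finset α}
    (ih : ∀ T ⊂ S, (𝓛.filter (· ⊆ T)).Nonempty → 2 * #(𝓛.filter (· ⊆ T)) + 1 ≤ #T)
    (hS : (𝓛.filter (· ⊂ S)).Nonempty) : 2 * #(𝓛.filter (· ⊂ S)) + 2 ≤ #S := by
  obtain ⟨M, hMmem, hmax⟩ := (𝓛.filter (· ⊂ S)).exists_maximal hS
  obtain ⟨hM, hMS⟩ := mem_filter.1 hMmem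
  rw [hlam.filter_ssubset_eq_union hM (hne M hM) hMS
      fun T hT hTS => hmax (mem_filter.2 ⟨hT, hTS⟩),
    card_union_of_disjoint (disjoint_filter_subset hne disjoint_sdiff)]
  have hinside := ih M hMS ⟨M, mem_filter.2 ⟨hM, subset_rfl⟩⟩
  have hcard := card_sdiff_add_card_eq_card hMS.subset
  have hMlt : #M < #S := card_lt_card hMS
  rcases (𝓛.filter (· ⊆ S \ M)).eq_empty_or_nonempty with houtside | houtside
  · rw [houtside, card_empty]
    omega
  · have := ih (S \ M) (sdiff_ssubset hMS.subset (hne M hM)) houtside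
    omega

lemma two_mul_card_filter_subset_add_one_le (hlam : Laminar 𝓛) (hodd : ∀ S ∈ 𝓛, Odd #S)
    (hthree : ∀ S ∈ 𝓛, 3 ≤ #S) (S : Finset α) (hS : (𝓛.filter (· ⊆ S)).Nonempty) :
    2 * #(𝓛.filter (· ⊆ S)) + 1 ≤ #S := by
  have hne : ∀ T ∈ 𝓛, T.Nonempty := fun T hT => card_pos.1 (by linarith [hthree T hT])
  induction S using Finset.strongInduction with
  | H S ih =>
  have hstrict := hlam.two_mul_card_filter_ssubset_add_two_le hne ih
  rw [filter_ssubset_eq_erase] at hstrict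
  by_cases hSmem : S ∈ 𝓛
  · have hcard := card_erase_add_one (mem_filter.2 ⟨hSmem, subset_rfl⟩ : S ∈ 𝓛.filter (· ⊆ S))
    have hS3 := hthree S hSmem
    obtain ⟨k, hk⟩ := hodd S hSmem
    rcases ((𝓛.filter (· ⊆ S)).erase S).eq_empty_or_nonempty with hbelow | hbelow
    · rw [hbelow, card_empty] at hcard
      omega
    · have := hstrict hbelow
      omega
  · rw [erase_eq_of_notMem fun h => hSmem (mem_filter.1 h).1] at hstrict
    exact (hstrict hS).trans' (by omega)

lemma card_eq_sum_card_filter_subset (hne : ∀ T ∈ 𝓛, T.Nonempty) {𝓜 : Finset (Finset α)}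
    (h𝓜 : (𝓜 : Set (Finset α)).PairwiseDisjoint id) (hcover : ∀ T ∈ 𝓛, ∃ M ∈ 𝓜, T ⊆ M) :
    #𝓛 = ∑ M ∈ 𝓜, #(𝓛.filter (· ⊆ M)) := by
  rw [← card_biUnion (t := fun M => 𝓛.filter (· ⊆ M)) fun M hM N hN hMN =>
    disjoint_filter_subset hne (h𝓜 hM hN hMN)]
  congr 1
  ext T
  simp only [mem_biUnion, mem_filter]
  exact ⟨fun hT => (hcover T hT).imp fun M ⟨hM, hTM⟩ => ⟨hM, hT, hTM⟩,
    fun ⟨_, _, hT, _⟩ => hT⟩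

end Laminar

/-- If `x : E → ℝ≥0` and `𝓛` is a laminar family of odd-cardinality vertex sets, each of
cardinality at least 3, with `∑_{e ∈ E(S)} x_e = (|S| - 1)/2` for every `S ∈ 𝓛`, then
`|𝓛| ≤ ∑_{e ∈ E} x_e`.  Here `E(S)` is the set of edges with both endpoints in `S`. -/
theorem tight_laminar_card_le {V : Type*} [Fintype V] [DecidableEq V]
    (G : SimpleGraph V) [DecidableRel G.Adj]
    (x : Sym2 V → ℝ) (hx : ∀ e ∈ G.edgeFinset, 0 ≤ x e)
    (𝓛 : Finset (Finset V)) (hlam : Laminar 𝓛)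
    (hodd : ∀ S ∈ 𝓛, Odd S.card) (hthree : ∀ S ∈ 𝓛, 3 ≤ S.card)
    (htight : ∀ S ∈ 𝓛, ∑ e ∈ G.edgeFinset ∩ S.sym2, x e = ((S.card : ℝ) - 1) / 2) :
    (𝓛.card : ℝ) ≤ ∑ e ∈ G.edgeFinset, x e := by
  have hne : ∀ T ∈ 𝓛, T.Nonempty := fun T hT => card_pos.1 (by linarith [hthree T hT])
  obtain ⟨𝓜, h𝓜𝓛, h𝓜, hcover⟩ := hlam.exists_pairwiseDisjoint_cover
  calc (#𝓛 : ℝ) = ∑ M ∈ 𝓜, (#(𝓛.filter (· ⊆ M)) : ℝ) := by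
        rw [Laminar.card_eq_sum_card_filter_subset hne h𝓜 hcover, Nat.cast_sum]
    _ ≤ ∑ M ∈ 𝓜, ∑ e ∈ G.edgeFinset ∩ M.sym2, x e := sum_le_sum fun M hM𝓜 => by
        have hM := h𝓜𝓛 hM𝓜
        have hcount : (2 * #(𝓛.filter (· ⊆ M)) + 1 : ℝ) ≤ #M := mod_cast
          hlam.two_mul_card_filter_subset_add_one_le hodd hthree M
            ⟨M, mem_filter.2 ⟨hM, subset_rfl⟩⟩
        rw [htight M hM]
        linarith
    _ ≤ ∑ e ∈ G.edgeFinset, x e := sum_sum_inter_sym2_le h𝓜 _ hx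
end

section
/- Let G = (V, E) be a finite simple bipartite graph with edge colors and all color bounds w_j = 1, and let α ≥ 3 be an integer. Let x : E → [0, 1] satisfy Σ_{e∈δ(v)} x_e ≤ 1 for all v ∈ V and Σ_{e∈E_j} x_e ≤ 1 for all colors j. Then there exists a matching M ⊆ E such that |M ∩ E_j| ≤ α for every color j and |M| ≥ (1 − 3/α) · Σ_{e∈E} x_e. -/
/-- A graph is bipartite if there is a set of vertices such that every edge has exactly
one endpoint inside it. -/
def IsBipartiteGraph {V : Type*} (G : SimpleGraph V) : Prop :=
  ∃ A : Set V, ∀ ⦃u v : V⦄, G.Adj u v → (u ∈ A ↔ v ∉ A)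

/-!
Only some colours, the active ones, keep their constraint `∑_{e ∈ E_j} y_e ≤ 1`; every other
colour has at most `α` edges left. Replace `y` by an extreme point of this LP with at least the
same value: its support has at most as many edges as there are tight constraints. If an active
colour has at most `α` support edges, restrict to the support, deactivate that colour and
recurse. Otherwise every active colour has more than `α` support edges, so the count gives
`α · #active ≤ #tight vertices ≤ 2 ∑ y`. Discarding the edges of active colours loses at most
`#active ≤ 2 ∑ y / α`, and on a bipartite graph what is left is dominated by an integral
matching (König, via Hall's theorem with deficiency). This gives even the factor `1 - 2/α`.
-/

open Finset Filter Topology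

theorem IsCompact.exists_mem_extremePoints_isMaxOn {E : Type*} [AddCommGroup E] [Module ℝ E]
    [TopologicalSpace E] [T2Space E] [IsTopologicalAddGroup E] [ContinuousSMul ℝ E]
    [LocallyConvexSpace ℝ E] {s : Set E} (hs : IsCompact s) (hne : s.Nonempty)
    (l : E →L[ℝ] ℝ) : ∃ x ∈ s.extremePoints ℝ, IsMaxOn l s x := by
  have h : IsExposed ℝ s {x ∈ s | ∀ y ∈ s, l y ≤ l x} := fun _ => ⟨l, rfl⟩
  obtain ⟨z, hzs, hz⟩ := hs.exists_isMaxOn hne l.continuous.continuousOn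
  obtain ⟨x, hx⟩ := (h.isCompact hs).extremePoints_nonempty ⟨z, hzs, hz⟩
  exact ⟨x, h.isExtreme.extremePoints_subset_extremePoints hx, hx.1.2⟩

theorem eq_zero_of_mem_extremePoints {E : Type*} [AddCommGroup E] [Module ℝ E] {K : Set E}
    {x w : E} (hx : x ∈ K.extremePoints ℝ) (hw : ∀ᶠ t : ℝ in 𝓝 0, x + t • w ∈ K) :
    w = 0 := by
  have hw' : ∀ᶠ t : ℝ in 𝓝 0, x + (-t) • w ∈ K :=
    (continuous_neg.tendsto' 0 0 neg_zero).eventually hw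
  obtain ⟨t, ⟨hplus, hminus⟩, ht⟩ :=
    (((hw.and hw').filter_mono nhdsWithin_le_nhds).and self_mem_nhdsWithin).exists
      (f := 𝓝[>] (0 : ℝ))
  have hseg : x ∈ openSegment ℝ (x + t • w) (x + (-t) • w) :=
    ⟨1 / 2, 1 / 2, by norm_num, by norm_num, by norm_num, by module⟩
  have : x + t • w = x := hx.2 hplus hminus hseg
  simpa [ne_of_gt ht] using this

theorem LinearMap.eventually_map_add_smul_le {E : Type*} [AddCommGroup E] [Module ℝ E]
    (l : E →ₗ[ℝ] ℝ) {x w : E} {b : ℝ} (hx : l x ≤ b) (hw : l x = b → l w = 0) :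
    ∀ᶠ t : ℝ in 𝓝 0, l (x + t • w) ≤ b := by
  simp only [map_add, map_smul, smul_eq_mul]
  rcases hx.lt_or_eq with hlt | heq
  · have : Tendsto (fun t : ℝ => l x + t * l w) (𝓝 0) (𝓝 (l x)) :=
      (by fun_prop : Continuous fun t : ℝ => l x + t * l w).tendsto' 0 (l x) (by simp)
    exact (this.eventually_lt_const hlt).mono fun _ => le_of_lt
  · simp [hw heq, heq]

theorem Finset.exists_partialMatching_of_card_le_card_biUnion_add {ι α : Type*} [Fintype ι]
    [DecidableEq ι] [DecidableEq α] (t : ι → Finset α) (d : ℕ)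
    (h : ∀ s : Finset ι, #s ≤ #(s.biUnion t) + d) :
    ∃ m : Finset (ι × α), (∀ p ∈ m, p.2 ∈ t p.1) ∧ Set.InjOn Prod.fst (m : Set (ι × α)) ∧
      Set.InjOn Prod.snd (m : Set (ι × α)) ∧ Fintype.card ι ≤ #m + d := by
  -- Hall's theorem once `d` new elements are added to every `t i`.
  let t' : ι → Finset (α ⊕ Fin d) := fun i => (t i).disjSum univ
  have hall (s : Finset ι) : #s ≤ #(s.biUnion t') := by
    obtain rfl | ⟨i, hi⟩ := s.eq_empty_or_nonempty
    · simp
    refine (h s).trans ?_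
    calc #(s.biUnion t) + d = #((s.biUnion t).disjSum (univ : Finset (Fin d))) := by simp
      _ ≤ #(s.biUnion t') := ?_
    refine card_le_card fun x hx => ?_
    rcases x with a | r
    · obtain ⟨j, hj, ha⟩ := mem_biUnion.1 (inl_mem_disjSum.1 hx)
      exact mem_biUnion.2 ⟨j, hj, inl_mem_disjSum.2 ha⟩
    · exact mem_biUnion.2 ⟨i, hi, inr_mem_disjSum.2 (mem_univ r)⟩
  obtain ⟨f, hf, hft⟩ := (all_card_le_biUnion_card_iff_exists_injective t').1 hall
  let m : Finset (ι × α) := (univ ×ˢ univ.biUnion t).filter fun p => f p.1 = .inl p.2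
  have hm (p : ι × α) : p ∈ m ↔ f p.1 = .inl p.2 := by
    refine ⟨fun hp => (mem_filter.1 hp).2, fun hp => mem_filter.2 ⟨?_, hp⟩⟩
    have := hft p.1
    rw [hp, inl_mem_disjSum] at this
    exact mem_product.2 ⟨mem_univ _, mem_biUnion.2 ⟨p.1, mem_univ _, this⟩⟩
  refine ⟨m, fun p hp => ?_, fun p hp q hq hpq => ?_, fun p hp q hq hpq => ?_, ?_⟩
  · simpa [t', (hm p).1 hp] using hft p.1
  · have := ((hm p).1 hp).symm.trans (hpq ▸ (hm q).1 hq)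
    exact Prod.ext hpq (Sum.inl_injective this)
  · have := hf (((hm p).1 hp).trans (hpq ▸ ((hm q).1 hq).symm))
    exact Prod.ext this hpq
  · let unmatched : Finset ι := univ \ m.image Prod.fst
    have hunmatched : #unmatched ≤ d := by
      calc #unmatched ≤ #((univ : Finset (Fin d)).map .inr) := by
            refine card_le_card_of_injOn f (fun i hi => ?_) hf.injOn
            rcases hfi : f i with a | r
            · exact absurd (mem_image.2 ⟨(i, a), (hm _).2 hfi, rfl⟩) (mem_sdiff.1 hi).2
            · simp
        _ = d := by simp
    calc Fintype.card ι = #(m.image Prod.fst) + #unmatched := by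
          rw [← card_univ, ← card_sdiff_add_card_eq_card (subset_univ (m.image Prod.fst)),
            add_comm]
      _ ≤ #m + d := add_le_add card_image_le hunmatched

theorem card_filter_mem_sym2_le_two {V : Type*} [DecidableEq V] (W : Finset V) (e : Sym2 V) :
    #{v ∈ W | v ∈ e} ≤ 2 :=
  calc #{v ∈ W | v ∈ e} ≤ #e.toFinset :=
        card_le_card fun v hv => by simpa using (mem_filter.1 hv).2
    _ ≤ 2 := by rw [Sym2.card_toFinset]; split_ifs <;> norm_num

theorem exists_eq_mk_of_mem_edgeFinset {V : Type*} [Fintype V] {G : SimpleGraph V}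
    [DecidableRel G.Adj] {P : Set V} [DecidablePred (· ∈ P)]
    (hP : ∀ ⦃u v : V⦄, G.Adj u v → (u ∈ P ↔ v ∉ P)) {e : Sym2 V} (he : e ∈ G.edgeFinset) :
    ∃ a ∈ ({v | v ∈ P} : Finset V), ∃ b ∉ ({v | v ∈ P} : Finset V), e = s(a, b) := by
  induction e using Sym2.ind with
  | h u v =>
  have huv : G.Adj u v := by simpa using he
  by_cases hu : u ∈ P
  · exact ⟨u, by simpa using hu, v, by simpa using (hP huv).1 hu, rfl⟩
  · exact ⟨v, by simpa using not_not.1 (mt (hP huv).2 hu), u, by simpa using hu, Sym2.eq_swap⟩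

section

variable {V ι : Type*} [Fintype V] [DecidableEq ι]

def colorLoad (c : Sym2 V → ι) (j : ι) : (Sym2 V → ℝ) →ₗ[ℝ] ℝ :=
  ∑ e with c e = j, LinearMap.proj e

@[simp]
theorem colorLoad_apply (c : Sym2 V → ι) (j : ι) (y : Sym2 V → ℝ) :
    colorLoad c j y = ∑ e with c e = j, y e := by
  simp [colorLoad]

theorem sum_colorLoad (c : Sym2 V → ι) (act : Finset ι) (y : Sym2 V → ℝ) :
    ∑ j ∈ act, colorLoad c j y = ∑ e with c e ∈ act, y e := by
  simpa using sum_fiberwise_eq_sum_filter univ act c y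

variable [DecidableEq V]

def vertexLoad (v : V) : (Sym2 V → ℝ) →ₗ[ℝ] ℝ := ∑ e with v ∈ e, LinearMap.proj e

@[simp]
theorem vertexLoad_apply (v : V) (y : Sym2 V → ℝ) : vertexLoad v y = ∑ e with v ∈ e, y e := by
  simp [vertexLoad]

theorem sum_vertexLoad (W : Finset V) (y : Sym2 V → ℝ) :
    ∑ v ∈ W, vertexLoad v y = ∑ e, #{v ∈ W | v ∈ e} * y e := by
  simp only [vertexLoad_apply, sum_filter]
  rw [sum_comm]
  refine sum_congr rfl fun e _ => ?_
  rw [← sum_filter, sum_const, nsmul_eq_mul]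

structure IsFracMatching (A : Finset (Sym2 V)) (y : Sym2 V → ℝ) : Prop where
  nonneg : ∀ e, 0 ≤ y e
  eq_zero_of_notMem : ∀ e ∉ A, y e = 0
  vertexLoad_le_one : ∀ v, vertexLoad v y ≤ 1

namespace IsFracMatching

variable {A : Finset (Sym2 V)} {y : Sym2 V → ℝ}

theorem le_one (hy : IsFracMatching A y) (e : Sym2 V) : y e ≤ 1 := by
  refine le_trans ?_ (hy.vertexLoad_le_one e.out.1)
  rw [vertexLoad_apply]
  exact single_le_sum (fun f _ => hy.nonneg f) (mem_filter.2 ⟨mem_univ e, Sym2.out_fst_mem e⟩)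

theorem sum_le_card_of_cover (hy : IsFracMatching A y) {W : Finset V}
    (hW : ∀ e ∈ A, ∃ v ∈ W, v ∈ e) : ∑ e, y e ≤ #W :=
  calc ∑ e, y e ≤ ∑ e, #{v ∈ W | v ∈ e} * y e := by
        refine sum_le_sum fun e _ => ?_
        by_cases he : e ∈ A
        · obtain ⟨v, hvW, hve⟩ := hW e he
          have : (1 : ℝ) ≤ #{v ∈ W | v ∈ e} := by
            exact_mod_cast card_pos.2 ⟨v, mem_filter.2 ⟨hvW, hve⟩⟩
          nlinarith [hy.nonneg e]
        · simp [hy.eq_zero_of_notMem e he]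
    _ = ∑ v ∈ W, vertexLoad v y := (sum_vertexLoad W y).symm
    _ ≤ ∑ _v ∈ W, 1 := sum_le_sum fun v _ => hy.vertexLoad_le_one v
    _ = #W := by simp

theorem card_tight_le (hy : IsFracMatching A y) :
    (#{v | vertexLoad v y = 1} : ℝ) ≤ 2 * ∑ e, y e :=
  calc (#{v | vertexLoad v y = 1} : ℝ) = ∑ v with vertexLoad v y = 1, vertexLoad v y := by
        rw [sum_congr rfl fun v hv => (mem_filter.1 hv).2]; simp
    _ = ∑ e, #{v ∈ univ.filter (vertexLoad · y = 1) | v ∈ e} * y e := sum_vertexLoad _ y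
    _ ≤ ∑ e, 2 * y e := sum_le_sum fun e _ =>
        mul_le_mul_of_nonneg_right (by exact_mod_cast card_filter_mem_sym2_le_two _ e)
          (hy.nonneg e)
    _ = 2 * ∑ e, y e := (mul_sum ..).symm

theorem exists_isMatchingSet_sum_le_card {L : Finset V}
    (hA : ∀ e ∈ A, ∃ a ∈ L, ∃ b ∉ L, e = s(a, b)) (hy : IsFracMatching A y) :
    ∃ M ⊆ A, IsMatchingSet M ∧ ∑ e, y e ≤ #M := by
  set n := ⌈∑ e, y e⌉₊
  let N (a : V) : Finset V := {b | a ∈ L ∧ b ∉ L ∧ s(a, b) ∈ A}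
  -- `(L \ s) ∪ N(s)` is a vertex cover of `A`.
  have hdefect (s : Finset V) : n + #s ≤ Fintype.card V + #(s.biUnion N) := by
    have hcover : ∑ e, y e ≤ #((L \ s) ∪ s.biUnion N) := by
      refine hy.sum_le_card_of_cover fun e he => ?_
      obtain ⟨a, ha, b, hb, rfl⟩ := hA e he
      by_cases has : a ∈ s
      · exact ⟨b, mem_union_right _ (mem_biUnion.2 ⟨a, has, by simp [N, ha, hb, he]⟩), by simp⟩
      · exact ⟨a, mem_union_left _ (mem_sdiff.2 ⟨ha, has⟩), by simp⟩
    have h₁ : n ≤ #(L \ s) + #(s.biUnion N) :=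
      Nat.ceil_le.2 (hcover.trans (by exact_mod_cast card_union_le _ _))
    have h₂ : #(L \ s) + #s ≤ Fintype.card V := card_sdiff_add_card L s ▸ card_le_univ _
    omega
  obtain ⟨m, hmN, hfst, hsnd, hcard⟩ :=
    exists_partialMatching_of_card_le_card_biUnion_add N (Fintype.card V - n)
      fun s => by have := hdefect s; omega
  have hmL (p : V × V) (hp : p ∈ m) : p.1 ∈ L ∧ p.2 ∉ L ∧ s(p.1, p.2) ∈ A := by
    simpa [N] using hmN p hp
  have hinj : Set.InjOn (fun p : V × V => s(p.1, p.2)) m := by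
    intro p hp q hq hpq
    rcases Sym2.eq_iff.1 hpq with ⟨h₁, h₂⟩ | ⟨h₁, -⟩
    · exact Prod.ext h₁ h₂
    · exact absurd (h₁ ▸ (hmL p hp).1) (hmL q hq).2.1
  refine ⟨m.image fun p => s(p.1, p.2), image_subset_iff.2 fun p hp => (hmL p hp).2.2, ?_, ?_⟩
  · intro e he f hf hne v hve hvf
    obtain ⟨p, hp, rfl⟩ := mem_image.1 he
    obtain ⟨q, hq, rfl⟩ := mem_image.1 hf
    have hpq : p ≠ q := fun h => hne (h ▸ rfl)
    rcases Sym2.mem_iff.1 hve with rfl | rfl <;> rcases Sym2.mem_iff.1 hvf with h | h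
    · exact hpq (hfst hp hq h)
    · exact (hmL q hq).2.1 (h ▸ (hmL p hp).1)
    · exact (hmL p hp).2.1 (h ▸ (hmL q hq).1)
    · exact hpq (hsnd hp hq h)
  · have := hdefect ∅
    rw [card_image_of_injOn hinj]
    exact (Nat.le_ceil _).trans (by exact_mod_cast (by simp at this; omega : n ≤ #m))

end IsFracMatching

def colorPolytope (A : Finset (Sym2 V)) (c : Sym2 V → ι) (act : Finset ι) :
    Set (Sym2 V → ℝ) :=
  {y | IsFracMatching A y ∧ ∀ j ∈ act, colorLoad c j y ≤ 1}

variable {A : Finset (Sym2 V)} {c : Sym2 V → ι} {act : Finset ι}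

theorem isCompact_colorPolytope : IsCompact (colorPolytope A c act) := by
  have hclosed : IsClosed (colorPolytope A c act) := by
    have : colorPolytope A c act = (⋂ e, {y | 0 ≤ y e}) ∩ (⋂ e ∉ A, {y | y e = 0}) ∩
        (⋂ v, {y | vertexLoad v y ≤ 1}) ∩ ⋂ j ∈ act, {y | colorLoad c j y ≤ 1} := by
      ext y
      simp only [colorPolytope, Set.mem_ofPred_eq, Set.mem_inter_iff, Set.mem_iInter]
      exact ⟨fun ⟨⟨h₁, h₂, h₃⟩, h₄⟩ => ⟨⟨⟨h₁, h₂⟩, h₃⟩, h₄⟩,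
        fun ⟨⟨⟨h₁, h₂⟩, h₃⟩, h₄⟩ => ⟨⟨h₁, h₂, h₃⟩, h₄⟩⟩
    rw [this]
    refine ((isClosed_iInter fun e => isClosed_le continuous_const (continuous_apply e)).inter
      (isClosed_iInter fun e => isClosed_iInter fun _ => isClosed_eq (continuous_apply e)
        continuous_const)).inter ?_ |>.inter ?_
    · exact isClosed_iInter fun v => isClosed_le (vertexLoad v).continuous_of_finiteDimensional
        continuous_const
    · exact isClosed_iInter fun j => isClosed_iInter fun _ =>
        isClosed_le (colorLoad c j).continuous_of_finiteDimensional continuous_const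
  refine (isCompact_univ_pi fun _ => isCompact_Icc (a := (0 : ℝ)) (b := 1)).of_isClosed_subset
    hclosed fun y hy => ?_
  exact Set.mem_univ_pi.2 fun e => ⟨hy.1.nonneg e, hy.1.le_one e⟩

theorem eventually_add_smul_mem_colorPolytope {y w : Sym2 V → ℝ}
    (hy : y ∈ colorPolytope A c act) (hw : ∀ e, y e = 0 → w e = 0)
    (hwv : ∀ v, vertexLoad v y = 1 → vertexLoad v w = 0)
    (hwc : ∀ j ∈ act, colorLoad c j y = 1 → colorLoad c j w = 0) :
    ∀ᶠ t : ℝ in 𝓝 0, y + t • w ∈ colorPolytope A c act := by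
  have hnonneg : ∀ᶠ t : ℝ in 𝓝 0, ∀ e, 0 ≤ (y + t • w) e := by
    refine eventually_all.2 fun e => ?_
    have := (-(LinearMap.proj e : (Sym2 V → ℝ) →ₗ[ℝ] ℝ)).eventually_map_add_smul_le
      (x := y) (w := w) (b := 0) (by simpa using hy.1.nonneg e)
      (fun h => by simp [hw e (by simpa using h)])
    exact this.mono fun t ht => by simp at ht; simp; linarith
  have hoff (e : Sym2 V) (he : e ∉ A) (t : ℝ) : (y + t • w) e = 0 := by
    have hye := hy.1.eq_zero_of_notMem e he
    simp [hye, hw e hye]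
  have hload : ∀ᶠ t : ℝ in 𝓝 0, ∀ v, vertexLoad v (y + t • w) ≤ 1 :=
    eventually_all.2 fun v =>
      (vertexLoad v).eventually_map_add_smul_le (hy.1.vertexLoad_le_one v) (hwv v)
  have hcolor : ∀ᶠ t : ℝ in 𝓝 0, ∀ j ∈ act, colorLoad c j (y + t • w) ≤ 1 :=
    (eventually_all_finset act).2 fun j hj =>
      (colorLoad c j).eventually_map_add_smul_le (hy.2 j hj) (hwc j hj)
  filter_upwards [hnonneg, hload, hcolor] with t h₁ h₂ h₃
  exact ⟨⟨h₁, fun e he => hoff e he t, h₂⟩, h₃⟩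

theorem card_support_le_card_tight {y : Sym2 V → ℝ}
    (hy : y ∈ (colorPolytope A c act).extremePoints ℝ) :
    #{e | 0 < y e} ≤ #{v | vertexLoad v y = 1} + #{j ∈ act | colorLoad c j y = 1} := by
  set S : Finset (Sym2 V) := {e | 0 < y e}
  set TV : Finset V := {v | vertexLoad v y = 1}
  set TC : Finset ι := {j ∈ act | colorLoad c j y = 1}
  let Φ : (Sym2 V → ℝ) →ₗ[ℝ] (TV → ℝ) × (TC → ℝ) × (↥Sᶜ → ℝ) :=
    (LinearMap.pi fun v => vertexLoad v.1).prod
      ((LinearMap.pi fun j => colorLoad c j.1).prod (LinearMap.pi fun e => LinearMap.proj e.1))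
  have hΦ : Function.Injective Φ := by
    refine injective_iff_map_eq_zero Φ |>.2 fun w hw => ?_
    have hwv (v : V) (hv : v ∈ TV) : vertexLoad v w = 0 :=
      congr_fun (congr_arg Prod.fst hw) ⟨v, hv⟩
    have hwc (j : ι) (hj : j ∈ TC) : colorLoad c j w = 0 :=
      congr_fun (congr_arg (·.2.1) hw) ⟨j, hj⟩
    have hwS (e : Sym2 V) (he : e ∉ S) : w e = 0 :=
      congr_fun (congr_arg (·.2.2) hw) ⟨e, mem_compl.2 he⟩
    refine eq_zero_of_mem_extremePoints hy (eventually_add_smul_mem_colorPolytope hy.1 ?_ ?_ ?_)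
    · intro e hye
      exact hwS e (by simp [S, hye])
    · intro v hv
      exact hwv v (mem_filter.2 ⟨mem_univ v, hv⟩)
    · intro j hj hj1
      exact hwc j (mem_filter.2 ⟨hj, hj1⟩)
  have := LinearMap.finrank_le_finrank_of_injective hΦ
  simp only [Module.finrank_prod, Module.finrank_fintype_fun_eq_card, Fintype.card_coe,
    card_compl] at this
  have := card_le_univ S
  omega

theorem mul_card_le_two_mul_sum_of_mem_extremePoints {α : ℕ} {y : Sym2 V → ℝ}
    (hy : y ∈ (colorPolytope A c act).extremePoints ℝ)
    (hlarge : ∀ j ∈ act, α < #{e | 0 < y e ∧ c e = j}) :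
    (α : ℝ) * #act ≤ 2 * ∑ e, y e := by
  have hsupport : (α + 1) * #act ≤ #{e | 0 < y e} :=
    calc (α + 1) * #act = ∑ _j ∈ act, (α + 1) := by rw [sum_const, smul_eq_mul, mul_comm]
      _ ≤ ∑ j ∈ act, #{e ∈ univ.filter (0 < y ·) | c e = j} :=
        sum_le_sum fun j hj => by simpa [filter_filter] using hlarge j hj
      _ = #{e ∈ univ.filter (0 < y ·) | c e ∈ act} := sum_card_fiberwise_eq_card_filter _ _ _
      _ ≤ #{e | 0 < y e} := card_filter_le _ _
  have htight := card_support_le_card_tight hy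
  have hcolors : #{j ∈ act | colorLoad c j y = 1} ≤ #act := card_filter_le _ _
  have hvertices : α * #act ≤ #{v | vertexLoad v y = 1} := by
    rw [add_one_mul] at hsupport; omega
  calc (α : ℝ) * #act ≤ #{v | vertexLoad v y = 1} := by exact_mod_cast hvertices
    _ ≤ 2 * ∑ e, y e := hy.1.1.card_tight_le

theorem exists_isMatchingSet_of_mul_card_le {L : Finset V}
    (hA : ∀ e ∈ A, ∃ a ∈ L, ∃ b ∉ L, e = s(a, b)) {α : ℕ} (hα : 0 < α)
    (hsmall : ∀ j ∉ act, #{e ∈ A | c e = j} ≤ α) {y : Sym2 V → ℝ}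
    (hy : y ∈ colorPolytope A c act) (hact : (α : ℝ) * #act ≤ 2 * ∑ e, y e) :
    ∃ M ⊆ A, IsMatchingSet M ∧ (∀ j, #{e ∈ M | c e = j} ≤ α) ∧
      (1 - 2 / α) * ∑ e, y e ≤ #M := by
  let z : Sym2 V → ℝ := fun e => if c e ∈ act then 0 else y e
  have hzy (e : Sym2 V) : z e ≤ y e := by by_cases h : c e ∈ act <;> simp [z, h, hy.1.nonneg e]
  have hz : IsFracMatching {e ∈ A | c e ∉ act} z := by
    refine ⟨fun e => ?_, fun e he => ?_, fun v => ?_⟩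
    · by_cases h : c e ∈ act <;> simp [z, h, hy.1.nonneg e]
    · by_cases h : c e ∈ act
      · simp [z, h]
      · simpa [z, h] using hy.1.eq_zero_of_notMem e (by simpa [h] using he)
    · refine le_trans ?_ (hy.1.vertexLoad_le_one v)
      simpa using sum_le_sum fun e (_ : e ∈ univ.filter (v ∈ ·)) => hzy e
  obtain ⟨M, hMA, hM, hMz⟩ :=
    hz.exists_isMatchingSet_sum_le_card fun e he => hA e (mem_filter.1 he).1
  have hsplit : ∑ e, y e ≤ ∑ e, z e + #act :=
    calc ∑ e, y e = ∑ e, z e + ∑ j ∈ act, colorLoad c j y := by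
          rw [sum_colorLoad, ← sum_filter_not_add_sum_filter univ (c · ∈ act)]
          simp [z, sum_ite]
      _ ≤ ∑ e, z e + ∑ _j ∈ act, 1 := by gcongr with j hj; exact hy.2 j hj
      _ = ∑ e, z e + #act := by simp
  refine ⟨M, hMA.trans (filter_subset _ _), hM, fun j => ?_, ?_⟩
  · by_cases hj : j ∈ act
    · have : {e ∈ M | c e = j} = ∅ :=
        filter_eq_empty_iff.2 fun e he hej => (mem_filter.1 (hMA he)).2 (hej ▸ hj)
      simp [this]
    · exact (card_le_card (filter_subset_filter _ (hMA.trans (filter_subset _ _)))).trans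
        (hsmall j hj)
  · have hαR : (0 : ℝ) < α := by exact_mod_cast hα
    have : (#act : ℝ) ≤ 2 / α * ∑ e, y e := by
      rw [div_mul_eq_mul_div, le_div_iff₀ hαR]; linarith
    linarith

theorem exists_isMatchingSet_of_mem_colorPolytope {L : Finset V} {α : ℕ} (hα : 2 ≤ α)
    (act : Finset ι) (A : Finset (Sym2 V)) (hA : ∀ e ∈ A, ∃ a ∈ L, ∃ b ∉ L, e = s(a, b))
    (hsmall : ∀ j ∉ act, #{e ∈ A | c e = j} ≤ α) {y : Sym2 V → ℝ}
    (hy : y ∈ colorPolytope A c act) :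
    ∃ M ⊆ A, IsMatchingSet M ∧ (∀ j, #{e ∈ M | c e = j} ≤ α) ∧
      (1 - 2 / α) * ∑ e, y e ≤ #M := by
  induction act using Finset.strongInduction generalizing A y with
  | H act ih =>
  have hfactor : (0 : ℝ) ≤ 1 - 2 / α := by
    rw [sub_nonneg, div_le_one (by positivity)]; exact_mod_cast hα
  obtain ⟨z, hz, hzmax⟩ := isCompact_colorPolytope.exists_mem_extremePoints_isMaxOn ⟨y, hy⟩
    (∑ e, ContinuousLinearMap.proj e)
  have hyz : (1 - 2 / α) * ∑ e, y e ≤ (1 - 2 / α) * ∑ e, z e :=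
    mul_le_mul_of_nonneg_left (by simpa using hzmax hy) hfactor
  set S : Finset (Sym2 V) := {e | 0 < z e}
  have hSA : S ⊆ A := fun e he => by
    by_contra h
    simp [S, hz.1.1.eq_zero_of_notMem e h] at he
  by_cases hdrop : ∃ j ∈ act, #{e ∈ S | c e = j} ≤ α
  · obtain ⟨j, hj, hjS⟩ := hdrop
    have hzS : z ∈ colorPolytope S c (act.erase j) := by
      refine ⟨⟨hz.1.1.nonneg, fun e he => ?_, hz.1.1.vertexLoad_le_one⟩,
        fun i hi => hz.1.2 i (mem_of_mem_erase hi)⟩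
      exact le_antisymm (by simpa [S] using he) (hz.1.1.nonneg e)
    obtain ⟨M, hMS, hM, hcap, hcard⟩ := ih (act.erase j) (erase_ssubset hj) S
      (fun e he => hA e (hSA he))
      (fun i hi => by
        by_cases hij : i = j
        · exact hij ▸ hjS
        · exact (card_le_card (filter_subset_filter _ hSA)).trans
            (hsmall i fun h => hi (mem_erase.2 ⟨hij, h⟩)))
      hzS
    exact ⟨M, hMS.trans hSA, hM, hcap, hyz.trans hcard⟩
  · push Not at hdrop
    have hcount := mul_card_le_two_mul_sum_of_mem_extremePoints hz
      fun j hj => by simpa [S, filter_filter] using hdrop j hj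
    obtain ⟨M, hMA, hM, hcap, hcard⟩ :=
      exists_isMatchingSet_of_mul_card_le hA (by omega) hsmall hz.1 hcount
    exact ⟨M, hMA, hM, hcap, hyz.trans hcard⟩

end

/-- 1-Bounded Color Matching on bipartite graphs: for any integer `α ≥ 3` and any
fractional solution `x` of the LP with all color bounds 1, there is a matching `M` with
at most `α` edges of each color and `|M| ≥ (1 - 3/α) ∑_e x_e`. -/
theorem one_bcm_bipartite_asymptotic {V : Type*} [Fintype V] [DecidableEq V]
    (G : SimpleGraph V) [DecidableRel G.Adj] (hbip : IsBipartiteGraph G)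
    (k : ℕ) (c : Sym2 V → Fin k)
    (α : ℕ) (hα : 3 ≤ α)
    (x : Sym2 V → ℝ) (hx : ∀ e ∈ G.edgeFinset, 0 ≤ x e ∧ x e ≤ 1)
    (hdeg : ∀ v : V, ∑ e ∈ G.edgeFinset.filter (fun e => v ∈ e), x e ≤ 1)
    (hcol : ∀ j : Fin k, ∑ e ∈ G.edgeFinset.filter (fun e => c e = j), x e ≤ 1) :
    ∃ M ⊆ G.edgeFinset, IsMatchingSet M ∧
      (∀ j : Fin k, (M.filter (fun e => c e = j)).card ≤ α) ∧
      (1 - 3 / (α : ℝ)) * ∑ e ∈ G.edgeFinset, x e ≤ (M.card : ℝ) := by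
  classical
  obtain ⟨P, hP⟩ := hbip
  let y : Sym2 V → ℝ := fun e => if e ∈ G.edgeFinset then x e else 0
  have hsum (p : Sym2 V → Prop) [DecidablePred p] :
      ∑ e with p e, y e = ∑ e ∈ G.edgeFinset with p e, x e := by
    rw [sum_ite_mem, filter_inter, univ_inter]
  have hy : y ∈ colorPolytope G.edgeFinset c univ :=
    ⟨⟨fun e => by dsimp only [y]; split_ifs with he; exacts [(hx e he).1, le_rfl],
      fun e he => if_neg he, fun v => by simpa [hsum] using hdeg v⟩,
      fun j _ => by simpa [hsum] using hcol j⟩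
  obtain ⟨M, hM, hmatch, hcap, hcard⟩ := exists_isMatchingSet_of_mem_colorPolytope
    (by omega : 2 ≤ α) univ G.edgeFinset (fun e he => exists_eq_mk_of_mem_edgeFinset hP he)
    (fun j hj => absurd (mem_univ j) hj) hy
  have htotal : ∑ e, y e = ∑ e ∈ G.edgeFinset, x e := by simpa using hsum fun _ => True
  have hfactor : 1 - 3 / (α : ℝ) ≤ 1 - 2 / α := by gcongr; norm_num
  refine ⟨M, hM, hmatch, hcap, le_trans ?_ (htotal ▸ hcard)⟩
  exact mul_le_mul_of_nonneg_right hfactor (sum_nonneg fun e he => (hx e he).1)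
end
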